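/- Let h ≥ 1, let X ⊆ B^h be nonempty, let G = Q_h(X), let u ∈ V(G) have degree h in G, and let z ∈ Z^u. Then there exists y ∈ \widehat X \ X' such that z ∈ I_G(0^h, y) (i.e., z ≤ y), z_i = 0 for every i with u_i = 1, and z_i = y_i for every i with u_i = 0; equivalently, z = y ∧ \bar u, where \bar u denotes the bitwise complement of u. -/

import Mathlib

open SimpleGraph

/-- The hypercube `Q_h` on binary words of length `h`: two words are adjacent
iff their Hamming distance is `1`. -/
def Qcube (h : ℕ) : SimpleGraph (Fin h → Bool) where
  Adj u v := hammingDist u v = 1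
  symm := ⟨fun u v huv => by show hammingDist v u = 1; rw [hammingDist_comm]; exact huv⟩
  loopless := ⟨fun u hu => by simp only [hammingDist_self] at hu; exact absurd hu (by norm_num)⟩

/-- Vertex set of the daisy cube `Q_h(X)`: all words below some element of `X`. -/
def daisyVerts {h : ℕ} (X : Set (Fin h → Bool)) : Set (Fin h → Bool) :=
  {v | ∃ x ∈ X, v ≤ x}

/-- The daisy cube `Q_h(X)`, the subgraph of `Q_h` induced by `daisyVerts X`. -/
def daisyGraph {h : ℕ} (X : Set (Fin h → Bool)) : SimpleGraph (daisyVerts X) :=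
  SimpleGraph.induce (daisyVerts X) (Qcube h)

/-- `\widehat X`: the set of maximal elements of the poset `(X, ≤)`. -/
def maxSet {h : ℕ} (X : Set (Fin h → Bool)) : Set (Fin h → Bool) :=
  {x ∈ X | ∀ y ∈ X, x ≤ y → x = y}

/-- The all-zeros word `0^h`. -/
def zeroW (h : ℕ) : Fin h → Bool := fun _ => false

/-- Bitwise XOR of words. -/
def xorW {h : ℕ} (u v : Fin h → Bool) : Fin h → Bool := fun i => xor (u i) (v i)

/-- Bitwise AND of words. -/
def andW {h : ℕ} (u v : Fin h → Bool) : Fin h → Bool := fun i => u i && v i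

/-- The weight `w(u)`: the number of ones of a word. -/
def weightW {h : ℕ} (u : Fin h → Bool) : ℕ :=
  (Finset.univ.filter fun i => u i = true).card

/-- The interval `I_G(u,v)`: vertices lying on shortest `u,v`-paths. -/
def gInterval {V : Type*} (G : SimpleGraph V) (u v : V) : Set V :=
  {w | G.dist u w + G.dist w v = G.dist u v}

/-- `N^u(v)`: neighbors of `v` that are closer to `u` than `v` is. -/
def lowerNbrs {V : Type*} (G : SimpleGraph V) (u v : V) : Set V :=
  {z | G.Adj v z ∧ G.dist u z + 1 = G.dist u v}

/-- `α` is an isometric embedding of `G` into `Q_h`. -/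
def IsIsomEmb {V : Type*} (G : SimpleGraph V) {h : ℕ} (α : V → Fin h → Bool) : Prop :=
  ∀ a b, hammingDist (α a) (α b) = G.dist a b

/-- `α` is a proper embedding of `G` into `Q_h`: an isometric embedding such that
`G` is isomorphic to the daisy cube generated by the image of `α`. -/
def IsProperEmb {V : Type*} (G : SimpleGraph V) {h : ℕ} (α : V → Fin h → Bool) : Prop :=
  IsIsomEmb G α ∧ Nonempty (G ≃g daisyGraph (Set.range α))

/-- `v` is a minimal vertex of `G`: some proper embedding sends `v` to `0^h`. -/
def IsMinVertex {V : Type*} (G : SimpleGraph V) (h : ℕ) (v : V) : Prop :=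
  ∃ α : V → Fin h → Bool, IsProperEmb G α ∧ α v = zeroW h

/-- The labeling conditions of Proposition `cubes`/Lemma `partial`: `α v = 0^h`,
the neighbors of `v` get pairwise distinct weight-one labels, and every other
vertex gets the bitwise OR of the labels of its down-neighbors. -/
def goodLabeling {V : Type*} (G : SimpleGraph V) {h : ℕ} (v : V)
    (α : V → Fin h → Bool) : Prop :=
  α v = zeroW h ∧
  Set.InjOn α (G.neighborSet v) ∧
  (∀ z ∈ G.neighborSet v, weightW (α z) = 1) ∧
  (∀ u ∉ insert v (G.neighborSet v),
    ∀ i, α u i = true ↔ ∃ z ∈ lowerNbrs G v u, α z i = true)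


section Aux
variable {h : ℕ} {X : Set (Fin h → Bool)}

lemma ham_update (a b : Fin h → Bool) (i : Fin h) (hi : a i ≠ b i) :
    hammingDist (Function.update a i (b i)) b + 1 = hammingDist a b := by
  classical
  simp only [hammingDist]
  have hset : (Finset.univ.filter fun j => Function.update a i (b i) j ≠ b j)
      = (Finset.univ.filter fun j => a j ≠ b j).erase i := by
    ext j
    simp only [Finset.mem_filter, Finset.mem_erase, Finset.mem_univ, true_and]
    by_cases hj : j = i
    · subst hj; simp
    · simp [Function.update_of_ne hj, hj]
  rw [hset, Finset.card_erase_add_one]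
  simp [hi]

lemma ham_update_self (a : Fin h → Bool) (i : Fin h) (c : Bool) (hc : c ≠ a i) :
    hammingDist a (Function.update a i c) = 1 := by
  classical
  simp only [hammingDist]
  have hset : (Finset.univ.filter fun j => a j ≠ Function.update a i c j) = {i} := by
    ext j
    simp only [Finset.mem_filter, Finset.mem_singleton, Finset.mem_univ, true_and]
    by_cases hj : j = i
    · subst hj; simp [Ne.symm hc]
    · simp [Function.update_of_ne hj, hj]
  rw [hset]; rfl

lemma daisy_mem_of_le {v w : Fin h → Bool} (hw : w ∈ daisyVerts X) (hv : v ≤ w) :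
    v ∈ daisyVerts X := by
  obtain ⟨x, hx, hwx⟩ := hw; exact ⟨x, hx, le_trans hv hwx⟩

lemma daisy_adj (a b : daisyVerts X) (hab : hammingDist a.1 b.1 = 1) :
    (daisyGraph X).Adj a b := hab

lemma daisy_ham_le_length {a b : daisyVerts X} (p : (daisyGraph X).Walk a b) :
    hammingDist a.1 b.1 ≤ p.length := by
  induction p with
  | nil => simp
  | @cons a c b hadj p ih =>
    have h1 : hammingDist a.1 c.1 = 1 := hadj
    calc hammingDist a.1 b.1 ≤ hammingDist a.1 c.1 + hammingDist c.1 b.1 :=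
          hammingDist_triangle _ _ _
      _ ≤ 1 + p.length := by rw [h1]; omega
      _ = (SimpleGraph.Walk.cons hadj p).length := by simp [SimpleGraph.Walk.length_cons]; omega

lemma daisy_exists_walk : ∀ (n : ℕ) (a b : daisyVerts X), hammingDist a.1 b.1 = n →
    ∃ p : (daisyGraph X).Walk a b, p.length = n := by
  intro n
  induction n with
  | zero =>
    intro a b hab
    have := hammingDist_eq_zero.mp hab
    have : a = b := Subtype.ext this
    subst this
    exact ⟨SimpleGraph.Walk.nil, rfl⟩
  | succ n ih =>
    intro a b hab
    have hne : a.1 ≠ b.1 := by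
      intro he; rw [he, hammingDist_self] at hab; omega
    have : ∃ i, a.1 i ≠ b.1 i := by
      by_contra hc
      push_neg at hc
      exact hne (funext hc)
    obtain ⟨i, hi⟩ := this
    by_cases ha : a.1 i = true
    · -- flip a down to b.1 i = false
      set a' : Fin h → Bool := Function.update a.1 i (b.1 i) with ha'def
      have hble : a' ≤ a.1 := by
        intro j
        by_cases hj : j = i
        · subst hj; simp [ha'def, ha]
        · simp [ha'def, Function.update_of_ne hj]
      have hmem : a' ∈ daisyVerts X := daisy_mem_of_le a.2 hble
      have hadj : (daisyGraph X).Adj a ⟨a', hmem⟩ :=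
        daisy_adj _ _ (ham_update_self a.1 i (b.1 i) (Ne.symm hi))
      have hham : hammingDist a' b.1 = n := by
        have := ham_update a.1 b.1 i hi
        simp only [ha'def]
        omega
      obtain ⟨p, hp⟩ := ih ⟨a', hmem⟩ b hham
      exact ⟨SimpleGraph.Walk.cons hadj p, by simp [hp]⟩
    · -- a i = false, b i = true : flip b down
      set b' : Fin h → Bool := Function.update b.1 i (a.1 i) with hb'def
      have hble : b' ≤ b.1 := by
        intro j
        by_cases hj : j = i
        · subst hj
          simp only [hb'def, Function.update_self]
          cases hc : a.1 j
          · simp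
          · exact absurd hc ha
        · simp [hb'def, Function.update_of_ne hj]
      have hmem : b' ∈ daisyVerts X := daisy_mem_of_le b.2 hble
      have hadj : (daisyGraph X).Adj (⟨b', hmem⟩ : daisyVerts X) b := by
        have := ham_update_self b.1 i (a.1 i) hi
        exact ((daisyGraph X).adj_symm (daisy_adj b ⟨b', hmem⟩ this))
      have hham : hammingDist a.1 b' = n := by
        have h1 := ham_update b.1 a.1 i (Ne.symm hi)
        rw [hammingDist_comm b.1 a.1] at h1
        rw [hammingDist_comm (Function.update b.1 i (a.1 i)) a.1] at h1
        simp only [hb'def]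
        omega
      obtain ⟨p, hp⟩ := ih a ⟨b', hmem⟩ hham
      exact ⟨p.concat hadj, by simp [SimpleGraph.Walk.length_concat, hp]⟩

lemma daisy_dist_eq (a b : daisyVerts X) :
    (daisyGraph X).dist a b = hammingDist a.1 b.1 := by
  obtain ⟨p, hp⟩ := daisy_exists_walk (hammingDist a.1 b.1) a b rfl
  have h1 : (daisyGraph X).dist a b ≤ hammingDist a.1 b.1 := hp ▸ SimpleGraph.dist_le p
  obtain ⟨q, hq⟩ := p.reachable.exists_walk_length_eq_dist
  have h2 := daisy_ham_le_length q
  omega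

lemma aux_contra (u z : daisyVerts X)
    (hz2 : lowerNbrs (daisyGraph X) u z = (daisyGraph X).neighborSet z)
    (i : Fin h) (c : Bool) (hc : c ≠ z.1 i) (hui : u.1 i = z.1 i)
    (hmem : Function.update z.1 i c ∈ daisyVerts X) : False := by
  set z' : daisyVerts X := ⟨Function.update z.1 i c, hmem⟩ with hz'
  have hadj : (daisyGraph X).Adj z z' := daisy_adj _ _ (ham_update_self z.1 i c hc)
  have hnb : z' ∈ (daisyGraph X).neighborSet z := hadj
  rw [← hz2] at hnb
  have hdist := hnb.2
  rw [daisy_dist_eq, daisy_dist_eq] at hdist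
  -- hammingDist u z' = hammingDist u z + 1
  have h1 := ham_update z'.1 u.1 i (by simp only [hz', Function.update_self, hui]; exact hc)
  have h2 : Function.update z'.1 i (u.1 i) = z.1 := by
    simp only [hz']
    rw [Function.update_idem, hui, Function.update_eq_self]
  rw [h2] at h1
  rw [hammingDist_comm u.1 z'.1, hammingDist_comm u.1 z.1] at hdist
  omega

end Aux


/-- Let `u` be a vertex of degree `h` of `G = Q_h(X)` and let
`z ∈ Z^u` (a vertex outside `V(G^u)` all of whose neighbors are closer to `u`).
Then there is a maximal `y` of `X` with `¬(u ≤ y)` such that `z ≤ y`, `z_i = 0`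
whenever `u_i = 1`, and `z_i = y_i` whenever `u_i = 0`. -/
theorem stmt_15 (h : ℕ) (hh : 1 ≤ h) (X : Set (Fin h → Bool)) (hX : X.Nonempty)
    (u : daisyVerts X) (hu : ((daisyGraph X).neighborSet u).ncard = h)
    (z : daisyVerts X)
    (hz1 : (z : Fin h → Bool) ∉
      {w : Fin h → Bool | ∃ x ∈ maxSet X, (u : Fin h → Bool) ≤ x ∧ w ≤ x})
    (hz2 : lowerNbrs (daisyGraph X) u z = (daisyGraph X).neighborSet z) :
    ∃ y ∈ maxSet X, ¬ (u : Fin h → Bool) ≤ y ∧ (z : Fin h → Bool) ≤ y ∧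
      (∀ i, (u : Fin h → Bool) i = true → (z : Fin h → Bool) i = false) ∧
      (∀ i, (u : Fin h → Bool) i = false → (z : Fin h → Bool) i = y i) := by
  classical
  obtain ⟨x0, hx0X, hzx0⟩ := z.2
  set S : Set (Fin h → Bool) := {x ∈ X | (z : Fin h → Bool) ≤ x} with hS
  have hSfin : S.Finite := Set.toFinite S
  have hSne : S.Nonempty := ⟨x0, ⟨hx0X, hzx0⟩⟩
  obtain ⟨y, hyS, hymax⟩ : ∃ y ∈ S, ∀ w ∈ S, id y ≤ id w → id y = id w := by
    obtain ⟨y, hy⟩ := hSfin.exists_maximal hSne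
    exact ⟨y, hy.1, fun w hw hyw => le_antisymm hyw (hy.2 hw hyw)⟩
  have hyX : y ∈ X := hyS.1
  have hzy : (z : Fin h → Bool) ≤ y := hyS.2
  have hymem : y ∈ maxSet X := by
    refine ⟨hyX, fun w hw hyw => ?_⟩
    exact hymax w ⟨hw, le_trans hzy hyw⟩ hyw
  refine ⟨y, hymem, ?_, hzy, ?_, ?_⟩
  · intro hle
    exact hz1 ⟨y, hymem, hle, hzy⟩
  · intro i hui
    by_contra hzi
    have hzi' : (z : Fin h → Bool) i = true := by
      cases hc : (z : Fin h → Bool) i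
      · exact absurd hc hzi
      · rfl
    refine aux_contra u z hz2 i false ?_ ?_ ?_
    · rw [hzi']; exact Bool.false_ne_true
    · rw [hui, hzi']
    · refine daisy_mem_of_le z.2 ?_
      intro j
      by_cases hj : j = i
      · subst hj; simp
      · simp [Function.update_of_ne hj]
  · intro i hui
    by_contra hne
    have hzi : (z : Fin h → Bool) i = false := by
      cases hc : (z : Fin h → Bool) i
      · rfl
      · exfalso
        have := hzy i
        rw [hc] at this
        have : y i = true := by
          cases hy : y i
          · rw [hy] at this; exact absurd this (by simp)
          · rfl
        exact hne (hc.trans this.symm)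
    have hyi : y i = true := by
      cases hy : y i
      · exact absurd (hzi.trans hy.symm) hne
      · rfl
    refine aux_contra u z hz2 i true ?_ ?_ ?_
    · rw [hzi]; simp
    · rw [hui, hzi]
    · refine ⟨y, hyX, ?_⟩
      intro j
      by_cases hj : j = i
      · subst hj; simp [hyi]
      · calc Function.update (z : Fin h → Bool) i true j = (z : Fin h → Bool) j := by
              simp [Function.update_of_ne hj]
          _ ≤ y j := hzy j
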